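/- arXiv:2206.13069 — 2 statements merged into one kernel-verified Lean document; each statement's English description precedes it below -/
import Mathlib

section
/- Let Y₁,…,Yₙ be independent real random variables with distribution functions F₁,…,Fₙ, let γ ∈ (0,1), and suppose gᵢ is a γ-quantile of Fᵢ for each i (i.e. Fᵢ(gᵢ-) ≤ γ ≤ Fᵢ(gᵢ)). Then there exist, on a common probability space, random variables with the same joint distribution as (Y₁,…,Yₙ) together with independent Bernoulli(γ) variables ξ₁,…,ξₙ such that simultaneously for all i: ξᵢ = 1 implies Yᵢ ≤ gᵢ, and ξᵢ = 0 implies Yᵢ ≥ gᵢ. -/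
open MeasureTheory ProbabilityTheory Set unitInterval

/-!
Let `νᵢ` be the law of `Yᵢ` and let `U₁,…,Uₙ` be independent uniform variables on `[0, 1]`,
independent of the `Yᵢ`. Put `ξᵢ = 1` if `Yᵢ < gᵢ`, or if `Yᵢ = gᵢ` and `Uᵢ ≤ tᵢ`, and `ξᵢ = 0`
otherwise. Then `P(ξᵢ = 1) = νᵢ(-∞, gᵢ) + tᵢ νᵢ{gᵢ}`, and since `gᵢ` is a `γ`-quantile the
threshold `tᵢ ∈ [0, 1]` can be chosen to make this `γ`. The pairs `(Yᵢ, Uᵢ)` are independent, hence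
so are the `ξᵢ`, and realising everything on `∏ᵢ (ℝ × [0, 1])` with the product of the measures
`νᵢ ⊗ Unif[0, 1]` does not change the joint law of the `Yᵢ`.
-/

def randomizedIic (g : ℝ) (t : I) : Set (ℝ × I) := {p | p.1 < g ∨ p.1 = g ∧ p.2 ≤ t}

section randomizedIic

variable {g : ℝ} {t : I} {p : ℝ × I}

lemma randomizedIic_eq_union (g : ℝ) (t : I) :
    randomizedIic g t = Iio g ×ˢ univ ∪ {g} ×ˢ Iic t := by
  ext ⟨y, u⟩
  simp [randomizedIic]

lemma measurableSet_randomizedIic (g : ℝ) (t : I) : MeasurableSet (randomizedIic g t) := by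
  rw [randomizedIic_eq_union]
  exact (measurableSet_Iio.prod .univ).union ((measurableSet_singleton g).prod measurableSet_Iic)

lemma fst_le_of_mem_randomizedIic (hp : p ∈ randomizedIic g t) : p.1 ≤ g :=
  hp.elim le_of_lt fun h => h.1.le

lemma le_fst_of_notMem_randomizedIic (hp : p ∉ randomizedIic g t) : g ≤ p.1 :=
  not_lt.mp fun h => hp (.inl h)

lemma measureReal_prod_volume_randomizedIic (ν : Measure ℝ) [IsFiniteMeasure ν] (g : ℝ) (t : I) :
    (ν.prod volume).real (randomizedIic g t) = ν.real (Iio g) + t * ν.real {g} := by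
  have hdisj : Disjoint (Iio g ×ˢ (univ : Set I)) ({g} ×ˢ Iic t) :=
    disjoint_prod.mpr (.inl (disjoint_singleton_right.mpr self_notMem_Iio))
  rw [randomizedIic_eq_union, measureReal_union hdisj
      ((measurableSet_singleton g).prod measurableSet_Iic),
    measureReal_prod_prod, measureReal_prod_prod, probReal_univ, mul_one, measureReal_def
      (s := Iic t), volume_Iic, ENNReal.toReal_ofReal t.2.1, mul_comm]

lemma exists_measureReal_prod_volume_randomizedIic_eq (ν : Measure ℝ) [IsFiniteMeasure ν]
    {g γ : ℝ} (hlt : ν.real (Iio g) ≤ γ) (hle : γ ≤ ν.real (Iic g)) :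
    ∃ t : I, (ν.prod volume).real (randomizedIic g t) = γ := by
  have hatom : ν.real (Iic g) = ν.real (Iio g) + ν.real {g} := by
    rw [← measureReal_union (disjoint_singleton_right.mpr self_notMem_Iio)
      (measurableSet_singleton g), Iio_union_right]
  have hγ : γ ∈ segment ℝ (ν.real (Iio g)) (ν.real (Iic g)) :=
    (segment_eq_Icc (hlt.trans hle)).symm ▸ ⟨hlt, hle⟩
  rw [segment_eq_image'] at hγ
  obtain ⟨t, ht, rfl⟩ := hγ
  exact ⟨⟨t, ht⟩, by rw [measureReal_prod_volume_randomizedIic, hatom, add_sub_cancel_left]; rfl⟩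

end randomizedIic

lemma Measure.map_fst_pi_prod {ι : Type*} [Fintype ι] {α β : ι → Type*}
    [∀ i, MeasurableSpace (α i)] [∀ i, MeasurableSpace (β i)]
    (μ : ∀ i, Measure (α i)) [∀ i, IsProbabilityMeasure (μ i)]
    (ν : ∀ i, Measure (β i)) [∀ i, IsProbabilityMeasure (ν i)] :
    (Measure.pi fun i => (μ i).prod (ν i)).map (fun x i => (x i).1) = Measure.pi μ := by
  rw [Measure.pi_map_pi fun i => measurable_fst.aemeasurable]
  simp

theorem coupling_bernoulli_two_sided_general {n : ℕ}
    {Ω : Type} [MeasurableSpace Ω] (P : Measure Ω) [IsProbabilityMeasure P]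
    (Y : Fin n → Ω → ℝ) (hY_meas : ∀ i, Measurable (Y i))
    (hY_indep : iIndepFun Y P)
    (γ : ℝ) (g : Fin n → ℝ)
    (hg_left : ∀ i, (P {ω | Y i ω < g i}).toReal ≤ γ)
    (hg_right : ∀ i, γ ≤ (P {ω | Y i ω ≤ g i}).toReal) :
    ∃ (Ω' : Type) (_ : MeasurableSpace Ω') (P' : Measure Ω')
      (_ : IsProbabilityMeasure P') (Y' : Fin n → Ω' → ℝ) (ξ : Fin n → Ω' → ℕ),
      (∀ i, Measurable (Y' i)) ∧ (∀ i, Measurable (ξ i)) ∧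
      Measure.map (fun ω i => Y' i ω) P' = Measure.map (fun ω i => Y i ω) P ∧
      iIndepFun ξ P' ∧
      (∀ i ω, ξ i ω ≤ 1) ∧
      (∀ i, (P' {ω | ξ i ω = 1}).toReal = γ) ∧
      (∀ i ω, ξ i ω = 1 → Y' i ω ≤ g i) ∧
      (∀ i ω, ξ i ω = 0 → g i ≤ Y' i ω) := by
  set ν : Fin n → Measure ℝ := fun i => P.map (Y i)
  have hν i : IsProbabilityMeasure (ν i) :=
    Measure.isProbabilityMeasure_map (hY_meas i).aemeasurable
  choose t ht using fun i => exists_measureReal_prod_volume_randomizedIic_eq (ν i) (γ := γ)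
    (by rw [map_measureReal_apply (hY_meas i) measurableSet_Iio]; exact hg_left i)
    (by rw [map_measureReal_apply (hY_meas i) measurableSet_Iic]; exact hg_right i)
  set S : Fin n → Set (ℝ × I) := fun i => randomizedIic (g i) (t i)
  have hξ_meas i : Measurable ((S i).indicator (1 : ℝ × I → ℕ)) :=
    measurable_const.indicator (measurableSet_randomizedIic _ _)
  refine ⟨Fin n → ℝ × I, inferInstance, Measure.pi fun i => (ν i).prod volume, inferInstance,
    fun i x => (x i).1, fun i x => (S i).indicator 1 (x i), fun i => by fun_prop,
    fun i => (hξ_meas i).comp (measurable_pi_apply i), ?_, iIndepFun_pi fun i =>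
      (hξ_meas i).aemeasurable, fun i x => indicator_le_self' (fun _ _ => zero_le_one) _, ?_,
    fun i x hx => fst_le_of_mem_randomizedIic ((indicator_eq_one_iff_mem ℕ).mp hx),
    fun i x hx => le_fst_of_notMem_randomizedIic ((indicator_eq_zero_iff_notMem ℕ).mp hx)⟩
  · rw [Measure.map_fst_pi_prod, (iIndepFun_iff_map_fun_eq_pi_map
      fun i => (hY_meas i).aemeasurable).mp hY_indep]
  · intro i
    have hpre : {x : Fin n → ℝ × I | (S i).indicator 1 (x i) = 1} = Function.eval i ⁻¹' S i := by
      ext x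
      exact indicator_eq_one_iff_mem ℕ
    rw [hpre, (measurePreserving_eval _ i).measure_preimage
      (measurableSet_randomizedIic _ _).nullMeasurableSet]
    exact ht i

/-- **Coupling lemma (Lemma 1 of Dümbgen–Lüthi, singleton version).**
If `Y₁,…,Yₙ` are independent with distribution functions `Fᵢ` and `gᵢ` is a
`γ`-quantile of `Fᵢ` (that is, `P(Yᵢ < gᵢ) ≤ γ ≤ P(Yᵢ ≤ gᵢ)`), then on a common
probability space there are variables with the same joint distribution as
`(Y₁,…,Yₙ)` together with independent Bernoulli(γ) variables `ξ₁,…,ξₙ` such that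
simultaneously for all `i`: `ξᵢ = 1 → Yᵢ ≤ gᵢ` and `ξᵢ = 0 → Yᵢ ≥ gᵢ`. -/
theorem coupling_bernoulli_two_sided {n : ℕ}
    {Ω : Type} [MeasurableSpace Ω] (P : Measure Ω) [IsProbabilityMeasure P]
    (Y : Fin n → Ω → ℝ) (hY_meas : ∀ i, Measurable (Y i))
    (hY_indep : iIndepFun Y P)
    (γ : ℝ) (hγ : γ ∈ Set.Ioo (0:ℝ) 1) (g : Fin n → ℝ)
    (hg_left : ∀ i, (P {ω | Y i ω < g i}).toReal ≤ γ)
    (hg_right : ∀ i, γ ≤ (P {ω | Y i ω ≤ g i}).toReal) :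
    ∃ (Ω' : Type) (_ : MeasurableSpace Ω') (P' : Measure Ω')
      (_ : IsProbabilityMeasure P') (Y' : Fin n → Ω' → ℝ) (ξ : Fin n → Ω' → ℕ),
      (∀ i, Measurable (Y' i)) ∧ (∀ i, Measurable (ξ i)) ∧
      Measure.map (fun ω i => Y' i ω) P' = Measure.map (fun ω i => Y i ω) P ∧
      iIndepFun ξ P' ∧
      (∀ i ω, ξ i ω ≤ 1) ∧
      (∀ i, (P' {ω | ξ i ω = 1}).toReal = γ) ∧
      (∀ i ω, ξ i ω = 1 → Y' i ω ≤ g i) ∧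
      (∀ i ω, ξ i ω = 0 → g i ≤ Y' i ω) :=
  coupling_bernoulli_two_sided_general P Y hY_meas hY_indep γ g hg_left hg_right
end

section
/- Define the confidence band L(x) := sup over B ∈ 𝓑 with max(B) ≤ x of y_{B:c_ℓ(N(B))}, and U(x) := inf over B ∈ 𝓑 with min(B) ≥ x of y_{B:N(B)+1−c_u(N(B))} (with sup ∅ = −∞, inf ∅ = +∞, y_{B:0} = −∞, y_{B:N(B)+1} = +∞). If g : ℝ → ℝ is nondecreasing and satisfies S_ℓ(B,g) ≥ c_ℓ(N(B)) and S_u(B,g) ≥ c_u(N(B)) for all B ∈ 𝓑, then L(x) ≤ g(x) ≤ U(x) for all x. -/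
/-!
If `max B ≤ t`, every index counted by `Sℓ(B, g)` has `yᵢ ≤ g(xᵢ) ≤ g(t)` by monotonicity,
so at least `cℓ(N B)` of the `y`-values over `B` lie below `g(t)`, and hence so does the
`cℓ(N B)`-th smallest of them. Symmetrically, `cu(N B)` values above `g(t)` put the
`cu(N B)`-th largest one above `g(t)` when `t ≤ min B`.
-/

open Finset

/-- Extended-real order statistic: the `k`-th smallest of `{y i : i ∈ T}`, with the
conventions `y_{T:0} = -∞` and `y_{T:k} = +∞` for `k > #T`. -/
noncomputable def orderStatE {n : ℕ} (T : Finset (Fin n)) (y : Fin n → ℝ) (k : ℕ) : EReal :=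
  if k = 0 then ⊥
  else if k ≤ T.card then ((Multiset.sort (T.val.map y) (· ≤ ·)).getD (k - 1) 0 : ℝ)
  else ⊤

namespace List

variable {α : Type*} [Preorder α] [DecidableLE α] {l : List α} {c : α} {j : ℕ}

theorem SortedLE.getElem_le_of_lt_countP (hl : l.SortedLE) (hj : j < l.length)
    (h : j < l.countP (fun a => decide (a ≤ c))) : l[j] ≤ c := by
  by_contra hjc
  have hdrop : (l.drop j).countP (fun a => decide (a ≤ c)) = 0 := by
    refine countP_eq_zero.mpr fun a ha hac => hjc ?_
    obtain ⟨i, hi, rfl⟩ := getElem_of_mem ha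
    rw [getElem_drop] at hac
    exact (hl.getElem_le_getElem_of_le (by omega)).trans (of_decide_eq_true hac)
  have htake : (l.take j).countP (fun a => decide (a ≤ c)) ≤ j :=
    countP_le_length.trans (length_take_le j l)
  have hsplit := congrArg (countP fun a => decide (a ≤ c)) (take_append_drop j l)
  rw [countP_append] at hsplit
  omega

theorem SortedLE.le_getElem_of_length_le_add_countP (hl : l.SortedLE) (hj : j < l.length)
    (h : l.length ≤ j + l.countP (fun a => decide (c ≤ a))) : c ≤ l[j] := by
  by_contra hjc
  have htake : (l.take (j + 1)).countP (fun a => decide (c ≤ a)) = 0 := by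
    refine countP_eq_zero.mpr fun a ha hca => hjc ?_
    obtain ⟨i, hi, rfl⟩ := getElem_of_mem ha
    rw [getElem_take] at hca
    exact (of_decide_eq_true hca).trans
      (hl.getElem_le_getElem_of_le (by simp only [length_take] at hi; omega))
  have hdrop : (l.drop (j + 1)).countP (fun a => decide (c ≤ a)) ≤ l.length - (j + 1) :=
    countP_le_length.trans (length_drop ..).le
  have hsplit := congrArg (countP fun a => decide (c ≤ a)) (take_append_drop (j + 1) l)
  rw [countP_append] at hsplit
  omega

end List

section orderStatE

variable {n : ℕ} (T : Finset (Fin n)) (y : Fin n → ℝ)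

theorem length_sort_map_val : (Multiset.sort (T.val.map y) (· ≤ ·)).length = #T := by
  rw [Multiset.length_sort, Multiset.card_map, card_val]

theorem countP_sort_map_val (p : ℝ → Prop) [DecidablePred p] :
    (Multiset.sort (T.val.map y) (· ≤ ·)).countP (p ·) = #(T.filter fun i => p (y i)) := by
  rw [← Multiset.coe_countP, Multiset.sort_eq, Multiset.countP_map]
  rfl

variable {T y}

theorem orderStatE_le_of_le_card_filter {k : ℕ} {c : ℝ}
    (h : k ≤ #(T.filter fun i => y i ≤ c)) :
    orderStatE T y k ≤ c := by
  have hkT : k ≤ #T := h.trans (card_filter_le _ _)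
  rcases k.eq_zero_or_pos with rfl | hk
  · simp [orderStatE]
  rw [orderStatE, if_neg hk.ne', if_pos hkT, EReal.coe_le_coe_iff,
    List.getD_eq_getElem _ _ (by rw [length_sort_map_val]; omega)]
  refine (Multiset.pairwise_sort _ _).sortedLE.getElem_le_of_lt_countP _ ?_
  rw [countP_sort_map_val T y (· ≤ c)]
  omega

theorem le_orderStatE_of_le_card_filter {m : ℕ} {c : ℝ}
    (h : m ≤ #(T.filter fun i => c ≤ y i)) :
    (c : EReal) ≤ orderStatE T y (#T + 1 - m) := by
  have hmT : m ≤ #T := h.trans (card_filter_le _ _)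
  rcases m.eq_zero_or_pos with rfl | hm
  · simp [orderStatE]
  rw [orderStatE, if_neg (by omega), if_pos (by omega), EReal.coe_le_coe_iff,
    List.getD_eq_getElem _ _ (by rw [length_sort_map_val]; omega)]
  refine (Multiset.pairwise_sort _ _).sortedLE.le_getElem_of_length_le_add_countP _ ?_
  rw [countP_sort_map_val T y (c ≤ ·), length_sort_map_val]
  omega

end orderStatE

theorem confidence_band_contains_g_general {n : ℕ} (x y : Fin n → ℝ)
    (𝓑 : Finset (ℝ × ℝ))
    (cℓ cu : ℕ → ℕ)
    (g : ℝ → ℝ) (hg : Monotone g)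
    (hSℓ : ∀ B ∈ 𝓑, cℓ (univ.filter fun i => x i ∈ Set.Icc B.1 B.2).card
      ≤ (univ.filter fun i => x i ∈ Set.Icc B.1 B.2 ∧ y i ≤ g (x i)).card)
    (hSu : ∀ B ∈ 𝓑, cu (univ.filter fun i => x i ∈ Set.Icc B.1 B.2).card
      ≤ (univ.filter fun i => x i ∈ Set.Icc B.1 B.2 ∧ g (x i) ≤ y i).card)
    (L U : ℝ → EReal)
    (hL : ∀ t, L t = sSup {v : EReal | ∃ B ∈ 𝓑, B.2 ≤ t ∧
      v = orderStatE (univ.filter fun i => x i ∈ Set.Icc B.1 B.2) y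
            (cℓ (univ.filter fun i => x i ∈ Set.Icc B.1 B.2).card)})
    (hU : ∀ t, U t = sInf {v : EReal | ∃ B ∈ 𝓑, t ≤ B.1 ∧
      v = orderStatE (univ.filter fun i => x i ∈ Set.Icc B.1 B.2) y
            ((univ.filter fun i => x i ∈ Set.Icc B.1 B.2).card + 1
              - cu (univ.filter fun i => x i ∈ Set.Icc B.1 B.2).card)}) :
    ∀ t : ℝ, L t ≤ (g t : EReal) ∧ (g t : EReal) ≤ U t := by
  intro t
  constructor
  · rw [hL]
    refine sSup_le ?_
    rintro _ ⟨B, hB, hBt, rfl⟩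
    refine orderStatE_le_of_le_card_filter ((hSℓ B hB).trans (card_le_card fun i => ?_))
    simp only [mem_filter, mem_univ, true_and]
    exact fun ⟨hxi, hyi⟩ => ⟨hxi, hyi.trans (hg (hxi.2.trans hBt))⟩
  · rw [hU]
    refine le_sInf ?_
    rintro _ ⟨B, hB, hBt, rfl⟩
    refine le_orderStatE_of_le_card_filter ((hSu B hB).trans (card_le_card fun i => ?_))
    simp only [mem_filter, mem_univ, true_and]
    exact fun ⟨hxi, hyi⟩ => ⟨hxi, (hg (hBt.trans hxi.1)).trans hyi⟩

/-- **Validity of the confidence band.**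
With data `(xᵢ, yᵢ)`, a family `𝓑` of compact intervals `[B.1, B.2]` with endpoints
among the `xᵢ`, counts `N(B)`, and critical values `cℓ(m), cu(m) ∈ {0,…,m}`, define
`L(t) = sup {y_{B:cℓ(N B)} : B ∈ 𝓑, max B ≤ t}` and
`U(t) = inf {y_{B:N(B)+1-cu(N B)} : B ∈ 𝓑, min B ≥ t}` (`sup ∅ = -∞`, `inf ∅ = ∞`).
If `g` is nondecreasing and satisfies `Sℓ(B,g) ≥ cℓ(N B)` and `Su(B,g) ≥ cu(N B)`
for all `B ∈ 𝓑`, then `L ≤ g ≤ U` everywhere. -/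
theorem confidence_band_contains_g {n : ℕ} (x y : Fin n → ℝ)
    (𝓑 : Finset (ℝ × ℝ))
    (h𝓑 : ∀ B ∈ 𝓑, B.1 ≤ B.2 ∧ (∃ i, B.1 = x i) ∧ ∃ i, B.2 = x i)
    (cℓ cu : ℕ → ℕ) (hcℓ : ∀ m, cℓ m ≤ m) (hcu : ∀ m, cu m ≤ m)
    (g : ℝ → ℝ) (hg : Monotone g)
    (hSℓ : ∀ B ∈ 𝓑, cℓ (univ.filter fun i => x i ∈ Set.Icc B.1 B.2).card
      ≤ (univ.filter fun i => x i ∈ Set.Icc B.1 B.2 ∧ y i ≤ g (x i)).card)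
    (hSu : ∀ B ∈ 𝓑, cu (univ.filter fun i => x i ∈ Set.Icc B.1 B.2).card
      ≤ (univ.filter fun i => x i ∈ Set.Icc B.1 B.2 ∧ g (x i) ≤ y i).card)
    (L U : ℝ → EReal)
    (hL : ∀ t, L t = sSup {v : EReal | ∃ B ∈ 𝓑, B.2 ≤ t ∧
      v = orderStatE (univ.filter fun i => x i ∈ Set.Icc B.1 B.2) y
            (cℓ (univ.filter fun i => x i ∈ Set.Icc B.1 B.2).card)})
    (hU : ∀ t, U t = sInf {v : EReal | ∃ B ∈ 𝓑, t ≤ B.1 ∧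
      v = orderStatE (univ.filter fun i => x i ∈ Set.Icc B.1 B.2) y
            ((univ.filter fun i => x i ∈ Set.Icc B.1 B.2).card + 1
              - cu (univ.filter fun i => x i ∈ Set.Icc B.1 B.2).card)}) :
    ∀ t : ℝ, L t ≤ (g t : EReal) ∧ (g t : EReal) ≤ U t :=
  confidence_band_contains_g_general x y 𝓑 cℓ cu g hg hSℓ hSu L U hL hU
end
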